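/- arXiv:1611.09104 — 2 statements merged into one kernel-verified Lean document; each statement's English description precedes it below -/
import Mathlib

section
/- Let A be a regular edge set in a finite directed acyclic graph G with source s, and let CUT be the primary minimum cut between s and A. Then: (1) for any regular edge set A' with A' ∼ A, CUT is also the primary minimum cut between s and A'; (2) for any regular edge set B with B ≺ A, CUT separates B from s. -/
open Finset

/-- Consecutive edges in the list match head-to-tail. -/
def EChain {V E : Type*} (tl hd : E → V) (p : List E) : Prop :=
  p.Chain' (fun d e => hd d = tl e)

/-- A (nonempty) directed path of edges starting at node `s`. -/
def PathFrom {V E : Type*} (tl hd : E → V) (s : V) (p : List E) : Prop :=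
  p ≠ [] ∧ EChain tl hd p ∧ ∀ e ∈ p.head?, tl e = s

/-- The directed graph is acyclic: no nonempty edge-chain returns to its start. -/
def Acyclic {V E : Type*} (tl hd : E → V) : Prop :=
  ∀ p : List E, p ≠ [] → EChain tl hd p →
    ∀ d ∈ p.head?, ∀ e ∈ p.getLast?, hd e ≠ tl d

/-- `B` separates the edge set `A` from `s`: every directed path from `s`
ending with an edge of `A` passes through an edge of `B` (i.e. `B` is a cut
between `s` and `A`). -/
def Separates {V E : Type*} (tl hd : E → V) (s : V) (A B : Finset E) : Prop :=
  ∀ p : List E, PathFrom tl hd s p → (∃ e ∈ p.getLast?, e ∈ A) → ∃ b ∈ B, b ∈ p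

/-- The minimum cut capacity between `s` and the edge set `A`. -/
noncomputable def mincut {V E : Type*} [Fintype E] (tl hd : E → V) (s : V)
    (A : Finset E) : ℕ :=
  sInf {n | ∃ B : Finset E, Separates tl hd s A B ∧ B.card = n}

/-- `B` is a minimum cut between `s` and the edge set `A`. -/
def IsMinCut {V E : Type*} [Fintype E] (tl hd : E → V) (s : V) (A B : Finset E) : Prop :=
  Separates tl hd s A B ∧ B.card = mincut tl hd s A

/-- An edge set is regular if its cardinality equals its minimum cut capacity from `s`. -/
def Regular {V E : Type*} [Fintype E] (tl hd : E → V) (s : V) (A : Finset E) : Prop :=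
  A.card = mincut tl hd s A

/-- `A ∼ A'`: the two edge sets have a common minimum cut from `s`. -/
def EquivSets {V E : Type*} [Fintype E] (tl hd : E → V) (s : V) (A A' : Finset E) : Prop :=
  ∃ C : Finset E, IsMinCut tl hd s A C ∧ IsMinCut tl hd s A' C

/-- `A₁ ≺ A₂`: `|A₁| < |A₂|` and some minimum cut between `s` and `A₂`
also separates `A₁` from `s`. -/
def Dominates {V E : Type*} [Fintype E] (tl hd : E → V) (s : V) (A₁ A₂ : Finset E) : Prop :=
  A₁.card < A₂.card ∧
    ∃ C : Finset E, IsMinCut tl hd s A₂ C ∧ Separates tl hd s A₁ C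

/-- A directed path of edges from node `s` to node `t`. -/
def NPathFromTo {V E : Type*} (tl hd : E → V) (s t : V) (p : List E) : Prop :=
  PathFrom tl hd s p ∧ ∀ e ∈ p.getLast?, hd e = t

/-- `B` is a cut between the nodes `s` and `t`. -/
def NSeparates {V E : Type*} (tl hd : E → V) (s t : V) (B : Finset E) : Prop :=
  ∀ p : List E, NPathFromTo tl hd s t p → ∃ b ∈ B, b ∈ p

/-- The minimum cut capacity between the nodes `s` and `t`. -/
noncomputable def nmincut {V E : Type*} [Fintype E] (tl hd : E → V) (s t : V) : ℕ :=
  sInf {n | ∃ B : Finset E, NSeparates tl hd s t B ∧ B.card = n}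

/-- `B` is a minimum cut between the nodes `s` and `t`. -/
def IsNodeMinCut {V E : Type*} [Fintype E] (tl hd : E → V) (s t : V) (B : Finset E) : Prop :=
  NSeparates tl hd s t B ∧ B.card = nmincut tl hd s t

/-- `d ≤ e` for edges: there is a directed path starting with `d` and ending with `e`
(in particular `d ≤ d`). -/
def EdgeLe {V E : Type*} (tl hd : E → V) (d e : E) : Prop :=
  ∃ p : List E, EChain tl hd p ∧ p.head? = some d ∧ p.getLast? = some e

/-- A family of pairwise edge-disjoint paths. -/
def EdgeDisjoint {E : Type*} {n : ℕ} (P : Fin n → List E) : Prop :=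
  ∀ i j, i ≠ j → List.Disjoint (P i) (P j)

/-- The primary minimum cut between nodes `s` and `t`: a minimum cut separating
every minimum cut between `s` and `t` from `s`. -/
def IsPrimaryNodeMinCut {V E : Type*} [Fintype E] (tl hd : E → V) (s t : V)
    (C : Finset E) : Prop :=
  IsNodeMinCut tl hd s t C ∧
    ∀ C' : Finset E, IsNodeMinCut tl hd s t C' → Separates tl hd s C' C

/-- The primary minimum cut between `s` and an edge set `A`. -/
def IsPrimaryMinCut {V E : Type*} [Fintype E] (tl hd : E → V) (s : V)
    (A C : Finset E) : Prop :=
  IsMinCut tl hd s A C ∧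
    ∀ C' : Finset E, IsMinCut tl hd s A C' → Separates tl hd s C' C

/-- The equivalence class (within the collection `𝒜`) of the wiretap set `A`
under the relation `∼`. -/
def ClassOf {V E : Type*} [Fintype E] (tl hd : E → V) (s : V)
    (𝒜 : Finset (Finset E)) (A : Finset E) : Set (Finset E) :=
  {A' | A' ∈ 𝒜 ∧ EquivSets tl hd s A A'}

/-- Domination amongst (distinct) equivalence classes: some common minimum cut of all
the sets in `C₂` separates every set in `C₁` from `s`. -/
def ClDominates {V E : Type*} [Fintype E] (tl hd : E → V) (s : V)
    (C₁ C₂ : Set (Finset E)) : Prop :=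
  C₁ ≠ C₂ ∧ ∃ CUT : Finset E,
    (∀ A ∈ C₂, IsMinCut tl hd s A CUT) ∧ (∀ A ∈ C₁, Separates tl hd s A CUT)

/-!
Both parts reduce to transitivity of `Separates` once one knows that every edge set `T` has a
primary minimum cut. For (2), a minimum cut of `A` separating `B` is itself separated by `CUT`.
For (1), a common minimum cut `C` of `A` and `A'` makes `CUT` a minimum cut of `A'`, and makes
the primary minimum cut `P` of `A'` a minimum cut of `A`; hence `CUT` separates `P`, which
separates every minimum cut of `A'`.

The primary minimum cut exists by submodularity. A minimum cut `X` is the set of edges leaving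
the set `reachSet X` of vertices reachable from `s` avoiding `X` (together with the edges of `T`
inside it). For two minimum cuts `X`, `Y`, the cut induced by `reachSet X ∩ reachSet Y` is again
minimum, so a minimum cut with the smallest reach set is below all others.
-/

section PrimaryMinCut

variable {V E : Type*} {tl hd : E → V} {s : V}

theorem PathFrom.of_append {l₁ l₂ : List E} (h : PathFrom tl hd s (l₁ ++ l₂)) (hl₁ : l₁ ≠ []) :
    PathFrom tl hd s l₁ :=
  ⟨hl₁, h.2.1.prefix ⟨l₂, rfl⟩, fun e he => h.2.2 e (by rwa [List.head?_append_of_ne_nil _ hl₁])⟩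

theorem PathFrom.concat {p : List E} {e : E} (hp : PathFrom tl hd s p)
    (hlink : ∀ d ∈ p.getLast?, hd d = tl e) : PathFrom tl hd s (p ++ [e]) := by
  refine ⟨by simp, List.isChain_append.2 ⟨hp.2.1, List.isChain_singleton e, ?_⟩, ?_⟩
  · intro x hx y hy
    simp only [List.head?_cons, Option.mem_some_iff] at hy
    exact hy ▸ hlink x hx
  · intro d hd'
    rw [List.head?_append_of_ne_nil _ hp.1] at hd'
    exact hp.2.2 d hd'

theorem Separates.trans {A B C : Finset E} (hAB : Separates tl hd s A B)
    (hBC : Separates tl hd s B C) : Separates tl hd s A C := by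
  intro p hp hlast
  obtain ⟨b, hbB, hbp⟩ := hAB p hp hlast
  obtain ⟨l₁, l₂, rfl⟩ := List.append_of_mem hbp
  have hq : PathFrom tl hd s (l₁ ++ [b]) :=
    PathFrom.of_append (l₂ := l₂) (by simpa using hp) (by simp)
  obtain ⟨c, hcC, hcq⟩ := hBC _ hq ⟨b, by simp, hbB⟩
  exact ⟨c, hcC, by simp only [List.mem_append, List.mem_cons] at hcq ⊢; tauto⟩

theorem separates_univ [Fintype E] (T : Finset E) : Separates tl hd s T univ := by
  rintro p - ⟨e, he, -⟩
  exact ⟨e, mem_univ e, List.mem_of_mem_getLast? he⟩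

theorem Separates.mincut_le_card [Fintype E] {T X : Finset E} (h : Separates tl hd s T X) :
    mincut tl hd s T ≤ X.card :=
  Nat.sInf_le ⟨X, h, rfl⟩

variable (tl hd s) in
theorem exists_isMinCut [Fintype E] (T : Finset E) : ∃ X, IsMinCut tl hd s T X :=
  Nat.sInf_mem (s := {n | ∃ B : Finset E, Separates tl hd s T B ∧ B.card = n})
    ⟨_, univ, separates_univ T, rfl⟩

variable (tl hd) in
noncomputable def edgeCut [Fintype E] (T : Finset E) (U : Set V) : Finset E :=
  open Classical in univ.filter fun e => tl e ∈ U ∧ (hd e ∉ U ∨ e ∈ T)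

theorem mem_edgeCut [Fintype E] {T : Finset E} {U : Set V} {e : E} :
    e ∈ edgeCut tl hd T U ↔ tl e ∈ U ∧ (hd e ∉ U ∨ e ∈ T) := by
  classical
  simp [edgeCut]

variable (tl hd s) in
def reachSet (X : Finset E) : Set V :=
  {v | v = s ∨ ∃ p, PathFrom tl hd s p ∧ (∀ e ∈ p, e ∉ X) ∧ ∃ e ∈ p.getLast?, hd e = v}

theorem start_mem_reachSet (X : Finset E) : s ∈ reachSet tl hd s X :=
  Or.inl rfl

theorem reachSet_finite [Fintype E] (X : Finset E) : (reachSet tl hd s X).Finite := by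
  refine ((Set.finite_range hd).insert s).subset ?_
  rintro v (rfl | ⟨-, -, -, e, -, rfl⟩)
  · exact Set.mem_insert _ _
  · exact Set.mem_insert_of_mem _ ⟨e, rfl⟩

theorem EChain.forall_mem_inside [Fintype E] {T : Finset E} {U : Set V} {p : List E}
    (hp : EChain tl hd p) (hstart : ∀ e ∈ p.head?, tl e ∈ U)
    (havoid : ∀ e ∈ p, e ∉ edgeCut tl hd T U) : ∀ e ∈ p, tl e ∈ U ∧ hd e ∈ U ∧ e ∉ T := by
  induction p with
  | nil => simp
  | cons a q ih =>
    obtain ⟨hlink, hq⟩ := List.isChain_cons.1 hp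
    have hta : tl a ∈ U := hstart a rfl
    have hna := havoid a List.mem_cons_self
    rw [mem_edgeCut] at hna
    push Not at hna
    obtain ⟨hha, hnT⟩ := hna hta
    have hrest := ih hq (fun d hd' => hlink d hd' ▸ hha)
      (fun d hd' => havoid d (List.mem_cons_of_mem _ hd'))
    rintro e (_ | ⟨_, he⟩)
    · exact ⟨hta, hha, hnT⟩
    · exact hrest e he

theorem PathFrom.forall_mem_inside [Fintype E] {T : Finset E} {U : Set V} {p : List E}
    (hp : PathFrom tl hd s p) (hs : s ∈ U) (havoid : ∀ e ∈ p, e ∉ edgeCut tl hd T U) :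
    ∀ e ∈ p, tl e ∈ U ∧ hd e ∈ U ∧ e ∉ T :=
  EChain.forall_mem_inside hp.2.1 (fun d hd' => hp.2.2 d hd' ▸ hs) havoid

theorem separates_edgeCut [Fintype E] (T : Finset E) {U : Set V} (hs : s ∈ U) :
    Separates tl hd s T (edgeCut tl hd T U) := by
  rintro p hp ⟨e, he, heT⟩
  by_contra! hcon
  exact (hp.forall_mem_inside hs (fun d hd hdC => hcon d hdC hd) e
    (List.mem_of_mem_getLast? he)).2.2 heT

theorem separates_edgeCut_of_subset [Fintype E] (T : Finset E) {U W : Set V} (hs : s ∈ U)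
    (hUW : U ⊆ W) : Separates tl hd s (edgeCut tl hd T W) (edgeCut tl hd T U) := by
  rintro p hp ⟨e, he, heW⟩
  by_contra! hcon
  obtain ⟨-, hhd, hnT⟩ := hp.forall_mem_inside hs (fun d hd hdC => hcon d hdC hd) e
    (List.mem_of_mem_getLast? he)
  rcases (mem_edgeCut.1 heW).2 with h | h
  · exact h (hUW hhd)
  · exact hnT h

theorem edgeCut_reachSet_subset [Fintype E] {T X : Finset E} (hX : Separates tl hd s T X) :
    edgeCut tl hd T (reachSet tl hd s X) ⊆ X := by
  intro e he
  rw [mem_edgeCut] at he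
  by_contra heX
  obtain ⟨p, hp, havoid, hlast⟩ :
      ∃ p, PathFrom tl hd s p ∧ (∀ d ∈ p, d ∉ X) ∧ p.getLast? = some e := by
    rcases he.1 with htl | ⟨q, hq, hqX, d, hd', hde⟩
    · refine ⟨[e], ⟨by simp, List.isChain_singleton e, ?_⟩, by simpa using heX, rfl⟩
      simpa using htl
    · refine ⟨q ++ [e], hq.concat ?_, ?_, List.getLast?_concat⟩
      · intro d' hd''
        obtain rfl : d' = d := Option.some_inj.1 (hd''.symm.trans hd')
        exact hde
      · simpa [or_imp, forall_and] using ⟨hqX, heX⟩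
  have hhd : hd e ∈ reachSet tl hd s X := Or.inr ⟨p, hp, havoid, e, hlast, rfl⟩
  rcases he.2 with h | h
  · exact h hhd
  · obtain ⟨b, hbX, hbp⟩ := hX p hp ⟨e, hlast, h⟩
    exact havoid b hbp hbX

theorem reachSet_edgeCut_subset [Fintype E] (T : Finset E) {U : Set V} (hs : s ∈ U) :
    reachSet tl hd s (edgeCut tl hd T U) ⊆ U := by
  rintro v (rfl | ⟨p, hp, havoid, e, he, rfl⟩)
  · exact hs
  · exact (hp.forall_mem_inside hs havoid e (List.mem_of_mem_getLast? he)).2.1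

theorem card_edgeCut_inter_add_card_edgeCut_union_le [Fintype E] (T : Finset E) (U W : Set V) :
    (edgeCut tl hd T (U ∩ W)).card + (edgeCut tl hd T (U ∪ W)).card ≤
      (edgeCut tl hd T U).card + (edgeCut tl hd T W).card := by
  classical
  simp only [edgeCut, card_filter, ← sum_add_distrib]
  refine sum_le_sum fun e _ => ?_
  by_cases h1 : tl e ∈ U <;> by_cases h2 : tl e ∈ W <;> by_cases h3 : hd e ∈ U <;>
    by_cases h4 : hd e ∈ W <;> by_cases h5 : e ∈ T <;> simp [h1, h2, h3, h4, h5]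

theorem IsMinCut.edgeCut_reachSet_eq [Fintype E] {T X : Finset E} (hX : IsMinCut tl hd s T X) :
    edgeCut tl hd T (reachSet tl hd s X) = X := by
  refine eq_of_subset_of_card_le (edgeCut_reachSet_subset hX.1) ?_
  rw [hX.2]
  exact (separates_edgeCut T (start_mem_reachSet X)).mincut_le_card

theorem IsMinCut.isMinCut_edgeCut_inter [Fintype E] {T X Y : Finset E}
    (hX : IsMinCut tl hd s T X) (hY : IsMinCut tl hd s T Y) :
    IsMinCut tl hd s T (edgeCut tl hd T (reachSet tl hd s X ∩ reachSet tl hd s Y)) := by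
  have hsU : s ∈ reachSet tl hd s X ∩ reachSet tl hd s Y :=
    ⟨start_mem_reachSet X, start_mem_reachSet Y⟩
  have hinter := (separates_edgeCut (tl := tl) (hd := hd) T hsU).mincut_le_card
  have hunion := (separates_edgeCut (tl := tl) (hd := hd) T
    (Set.mem_union_left (reachSet tl hd s Y) hsU.1)).mincut_le_card
  have hsub := card_edgeCut_inter_add_card_edgeCut_union_le (tl := tl) (hd := hd) T
    (reachSet tl hd s X) (reachSet tl hd s Y)
  rw [hX.edgeCut_reachSet_eq, hY.edgeCut_reachSet_eq, hX.2, hY.2] at hsub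
  exact ⟨separates_edgeCut T hsU, by omega⟩

variable (tl hd s) in
theorem exists_isPrimaryMinCut [Fintype E] (T : Finset E) : ∃ P, IsPrimaryMinCut tl hd s T P := by
  classical
  obtain ⟨P, hP, hPmin⟩ := exists_min_image (univ.filter (IsMinCut tl hd s T))
    (fun X => (reachSet tl hd s X).ncard) (by
      obtain ⟨X, hX⟩ := exists_isMinCut tl hd s T
      exact ⟨X, mem_filter.2 ⟨mem_univ X, hX⟩⟩)
  rw [mem_filter] at hP
  refine ⟨P, hP.2, fun Y hY => ?_⟩
  set S := reachSet tl hd s P ∩ reachSet tl hd s Y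
  have hS := hP.2.isMinCut_edgeCut_inter hY
  have hsub : reachSet tl hd s (edgeCut tl hd T S) ⊆ S :=
    reachSet_edgeCut_subset T ⟨start_mem_reachSet P, start_mem_reachSet Y⟩
  -- minimality of the reach set of `P` forces `reachSet P ⊆ S`
  have hPS : reachSet tl hd s P ⊆ reachSet tl hd s Y := by
    have heq := Set.eq_of_subset_of_ncard_le (hsub.trans Set.inter_subset_left)
      (hPmin _ (mem_filter.2 ⟨mem_univ _, hS⟩)) (reachSet_finite P)
    exact heq ▸ hsub.trans Set.inter_subset_right
  simpa only [hP.2.edgeCut_reachSet_eq, hY.edgeCut_reachSet_eq] using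
    separates_edgeCut_of_subset (tl := tl) (hd := hd) T (start_mem_reachSet P) hPS

theorem IsMinCut.of_separates_commonMinCut [Fintype E] {A A' C X : Finset E}
    (hX : IsMinCut tl hd s A X) (hCA : IsMinCut tl hd s A C) (hCA' : IsMinCut tl hd s A' C)
    (hCX : Separates tl hd s C X) : IsMinCut tl hd s A' X :=
  ⟨hCA'.1.trans hCX, by rw [hX.2, ← hCA.2, hCA'.2]⟩

end PrimaryMinCut

theorem primaryMinCut_props_general {V E : Type*} [Fintype E] (tl hd : E → V) (s : V)
    (A CUT : Finset E)
    (hCUT : IsPrimaryMinCut tl hd s A CUT) :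
    (∀ A' : Finset E, Regular tl hd s A' → EquivSets tl hd s A' A →
      IsPrimaryMinCut tl hd s A' CUT) ∧
    (∀ B : Finset E, Regular tl hd s B → Dominates tl hd s B A →
      Separates tl hd s B CUT) := by
  refine ⟨fun A' _ ⟨C, hCA', hCA⟩ => ⟨?_, fun C' hC' => ?_⟩,
    fun B _ ⟨_, C, hCA, hBC⟩ => hBC.trans (hCUT.2 C hCA)⟩
  · exact hCUT.1.of_separates_commonMinCut hCA hCA' (hCUT.2 C hCA)
  · obtain ⟨P, hPmin, hPprim⟩ := exists_isPrimaryMinCut tl hd s A'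
    exact (hPprim C' hC').trans
      (hCUT.2 P (hPmin.of_separates_commonMinCut hCA' hCA (hPprim C hCA')))

/-- if `CUT` is the primary minimum cut between `s` and a regular
edge set `A`, then (1) it is also the primary minimum cut of any regular `A' ∼ A`,
and (2) it separates from `s` any regular `B` with `B ≺ A`. -/
theorem primaryMinCut_props {V E : Type*} [Fintype E] (tl hd : E → V) (s : V)
    (hacy : Acyclic tl hd) (hsrc : ∀ e : E, hd e ≠ s)
    (A CUT : Finset E) (hA : Regular tl hd s A)
    (hCUT : IsPrimaryMinCut tl hd s A CUT) :
    (∀ A' : Finset E, Regular tl hd s A' → EquivSets tl hd s A' A →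
      IsPrimaryMinCut tl hd s A' CUT) ∧
    (∀ B : Finset E, Regular tl hd s B → Dominates tl hd s B A →
      Separates tl hd s B CUT) :=
  primaryMinCut_props_general tl hd s A CUT hCUT
end

section
/- In a unit-capacity network G with a maximum flow f from source s to sink t, the edge set CUT = {e : tail(e) is f-reachable from s and head(e) is not f-reachable from s}, where a node is f-reachable if there is an f-unsaturated path to it from s (forward edges with flow 0 or reverse edges with flow 1), is the primary minimum cut between s and t. -/
open Finset

/-- A unit-capacity flow from `s` to `t`: values in `{0,1}` and conservation at
every intermediate node. -/
def IsFlow {V E : Type*} [Fintype E] [DecidableEq V] (tl hd : E → V) (s t : V)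
    (f : E → ℕ) : Prop :=
  (∀ e, f e ≤ 1) ∧ ∀ v : V, v ≠ s → v ≠ t →
    (∑ e : E, if hd e = v then f e else 0) = ∑ e : E, if tl e = v then f e else 0

/-- The value of a flow: net outflow at the source. -/
noncomputable def flowValue {V E : Type*} [Fintype E] [DecidableEq V]
    (tl hd : E → V) (s : V) (f : E → ℕ) : ℕ :=
  (∑ e : E, if tl e = s then f e else 0) - ∑ e : E, if hd e = s then f e else 0

/-- `f`-reachability from `s` along `f`-unsaturated paths: forward edges with
flow `0` or reverse edges with flow `1`. -/
inductive FReach {V E : Type*} (tl hd : E → V) (f : E → ℕ) (s : V) : V → Prop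
  | refl : FReach tl hd f s s
  | forward (e : E) : FReach tl hd f s (tl e) → f e = 0 → FReach tl hd f s (hd e)
  | backward (e : E) : FReach tl hd f s (hd e) → f e = 1 → FReach tl hd f s (tl e)

/-!
Let `S` be the set of `f`-reachable nodes, so that `CUT` is the set of edges leaving `S`.
Flow conservation makes the flow out of any node set containing `s` but not `t` equal to the
value of `f` plus the flow into it. The edges leaving the set `S_B` of nodes that cannot reach `t`
without crossing a minimum cut `B` lie in `B`, so the flow out of `S_B` is at most `|B| = val f`.
Hence every edge leaving `S_B` is saturated and no flow enters `S_B`: `S_B` is closed under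
unsaturated steps, so `S ⊆ S_B`. In particular `t ∉ S`, and since `S` itself is closed under
unsaturated steps the same count gives `|CUT| = val f`. Finally, a path from `s` to an edge `e`
of a minimum cut `B` that avoids `CUT` would put `hd e` in `S ⊆ S_B`; but minimality of `B`
forces `hd e` to reach `t` avoiding `B`.
-/

section Paths

variable {V E : Type*} {tl hd : E → V}

theorem NPathFromTo.singleton (e : E) : NPathFromTo tl hd (tl e) (hd e) [e] :=
  ⟨⟨List.cons_ne_nil e [], List.isChain_singleton e, fun _ h => by cases h; rfl⟩,
    fun _ h => by cases h; rfl⟩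

theorem NPathFromTo.cons {e : E} {t : V} {p : List E} (hp : NPathFromTo tl hd (hd e) t p) :
    NPathFromTo tl hd (tl e) t (e :: p) := by
  obtain ⟨⟨hne, hch, hhead⟩, hlast⟩ := hp
  refine ⟨⟨List.cons_ne_nil e p, hch.cons fun d hd' => (hhead d hd').symm, fun _ h => by
    cases h; rfl⟩, ?_⟩
  obtain ⟨d, q, rfl⟩ := List.exists_cons_of_ne_nil hne
  simpa only [List.getLast?_cons_cons] using hlast

theorem NPathFromTo.target_mem {P : V → Prop} {s t : V} {p : List E}
    (hp : NPathFromTo tl hd s t p) (hs : P s) (hstep : ∀ e ∈ p, P (tl e) → P (hd e)) : P t := by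
  induction p generalizing s with
  | nil => exact absurd rfl hp.1.1
  | cons a q ih =>
    obtain ⟨⟨-, hch, hhead⟩, hlast⟩ := hp
    have ha : P (hd a) := hstep a List.mem_cons_self (hhead a rfl ▸ hs)
    cases q with
    | nil => exact hlast a rfl ▸ ha
    | cons b r =>
      obtain ⟨hab, hch'⟩ := List.isChain_cons_cons.mp hch
      refine ih ⟨⟨List.cons_ne_nil b r, hch', fun _ h => by cases h; exact hab.symm⟩, ?_⟩ ha
        fun e he => hstep e (List.mem_cons_of_mem a he)
      simpa only [List.getLast?_cons_cons] using hlast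

variable (tl hd) in
def ReachesAvoiding (t : V) (B : Finset E) (v : V) : Prop :=
  v = t ∨ ∃ p, NPathFromTo tl hd v t p ∧ ∀ e ∈ p, e ∉ B

theorem ReachesAvoiding.of_hd {t : V} {B : Finset E} {e : E} (he : e ∉ B)
    (h : ReachesAvoiding tl hd t B (hd e)) :
    ReachesAvoiding tl hd t B (tl e) := by
  refine Or.inr ?_
  rcases h with h | ⟨p, hp, hpB⟩
  · exact ⟨[e], h ▸ NPathFromTo.singleton e, by simpa using he⟩
  · exact ⟨e :: p, hp.cons, by simpa using ⟨he, hpB⟩⟩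

theorem NSeparates.not_reachesAvoiding {s t : V} {B : Finset E} (hts : t ≠ s)
    (hB : NSeparates tl hd s t B) : ¬ ReachesAvoiding tl hd t B s := by
  rintro (h | ⟨p, hp, hpB⟩)
  · exact hts h.symm
  · obtain ⟨b, hbB, hbp⟩ := hB p hp
    exact hpB b hbp hbB

end Paths

section MinCuts

variable {V E : Type*} [Fintype E] {tl hd : E → V} {s t : V}

theorem nmincut_le_card {B : Finset E} (hB : NSeparates tl hd s t B) :
    nmincut tl hd s t ≤ B.card :=
  Nat.sInf_le ⟨B, hB, rfl⟩

variable (tl hd s t) in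
theorem exists_isNodeMinCut : ∃ B, IsNodeMinCut tl hd s t B := by
  have huniv : NSeparates tl hd s t univ := fun p hp => by
    obtain ⟨e, q, rfl⟩ := List.exists_cons_of_ne_nil hp.1.1
    exact ⟨e, mem_univ e, List.mem_cons_self⟩
  obtain ⟨B, hB, hcard⟩ := Nat.sInf_mem (⟨_, univ, huniv, rfl⟩ :
    {n | ∃ B : Finset E, NSeparates tl hd s t B ∧ B.card = n}.Nonempty)
  exact ⟨B, hB, hcard⟩

/-- Every edge of a minimum cut is essential: otherwise erasing it would leave a smaller cut. -/
theorem IsNodeMinCut.reachesAvoiding_hd {C : Finset E} {e : E} (hts : t ≠ s)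
    (hC : IsNodeMinCut tl hd s t C) (he : e ∈ C) :
    ReachesAvoiding tl hd t C (hd e) := by
  classical
  by_contra hT
  have hsep : NSeparates tl hd s t (C.erase e) := by
    intro r hr
    by_contra! hr_avoid
    refine hr.target_mem (P := fun v => ¬ ReachesAvoiding tl hd t C v)
      (hC.1.not_reachesAvoiding hts) (fun d hdr hPd => ?_) (Or.inl rfl)
    by_cases hdC : d ∈ C
    · obtain rfl : d = e := by_contra fun hde => hr_avoid d (mem_erase.2 ⟨hde, hdC⟩) hdr
      exact hT
    · exact fun h => hPd (h.of_hd hdC)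
  have hle := nmincut_le_card hsep
  rw [card_erase_of_mem he, hC.2] at hle
  have hpos : 0 < nmincut tl hd s t := hC.2 ▸ card_pos.2 ⟨e, he⟩
  omega

end MinCuts

section Residual

variable {V E : Type*} {tl hd : E → V} {s : V} {f : E → ℕ}

variable (tl hd f) in
def ResidualClosed (S : V → Prop) : Prop :=
  (∀ e, f e = 0 → S (tl e) → S (hd e)) ∧ ∀ e, f e = 1 → S (hd e) → S (tl e)

theorem residualClosed_freach : ResidualClosed tl hd f (FReach tl hd f s) :=
  ⟨fun e he h => .forward e h he, fun e he h => .backward e h he⟩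

theorem ResidualClosed.freach_imp {S : V → Prop} (hS : ResidualClosed tl hd f S) (hs : S s)
    {v : V} (hv : FReach tl hd f s v) : S v := by
  induction hv with
  | refl => exact hs
  | forward e _ he ih => exact hS.1 e he ih
  | backward e _ he ih => exact hS.2 e he ih

end Residual

section Flows

variable {V E : Type*} [Fintype E] {tl hd : E → V}

open Classical in
noncomputable def leaving (tl hd : E → V) (S : V → Prop) : Finset E :=
  {e | S (tl e) ∧ ¬ S (hd e)}

theorem mem_leaving {S : V → Prop} {e : E} : e ∈ leaving tl hd S ↔ S (tl e) ∧ ¬ S (hd e) := by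
  simp [leaving]

theorem NPathFromTo.target_mem_of_disjoint_leaving {S : V → Prop} {s t : V} {p : List E}
    (hp : NPathFromTo tl hd s t p) (hs : S s) (hp_avoid : ∀ b ∈ leaving tl hd S, b ∉ p) : S t :=
  hp.target_mem hs fun e he hSe => by_contra fun hne => hp_avoid e (mem_leaving.2 ⟨hSe, hne⟩) he

theorem nSeparates_leaving {S : V → Prop} {s t : V} (hs : S s) (ht : ¬ S t) :
    NSeparates tl hd s t (leaving tl hd S) := fun _ hp => by
  by_contra! hp_avoid
  exact ht (hp.target_mem_of_disjoint_leaving hs hp_avoid)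

theorem sum_ite_comp_eq_sum_fiber (g : E → V) {W : Finset V} (hW : ∀ e, g e ∈ W)
    [DecidableEq V] (S : V → Prop) [DecidablePred S] (f : E → ℕ) :
    ∑ e, (if S (g e) then f e else 0) = ∑ v ∈ W with S v, ∑ e, if g e = v then f e else 0 := by
  rw [sum_comm]
  refine sum_congr rfl fun e _ => ?_
  rw [sum_ite_eq]
  simp [hW e]

theorem residualClosed_iff {f : E → ℕ} (hf : ∀ e, f e ≤ 1) {S : V → Prop} :
    ResidualClosed tl hd f S ↔
      (∀ e ∈ leaving tl hd S, f e = 1) ∧ ∀ e ∈ leaving hd tl S, f e = 0 := by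
  simp only [ResidualClosed, mem_leaving]
  refine ⟨fun ⟨hfwd, hbwd⟩ => ⟨fun e ⟨h1, h2⟩ => ?_, fun e ⟨h1, h2⟩ => ?_⟩,
    fun ⟨hout, hin⟩ => ⟨fun e he h1 => ?_, fun e he h1 => ?_⟩⟩
  · have := hf e
    have : f e ≠ 0 := fun h0 => h2 (hfwd e h0 h1)
    omega
  · have := hf e
    have : f e ≠ 1 := fun h0 => h2 (hbwd e h0 h1)
    omega
  · exact by_contra fun h2 => absurd (hout e ⟨h1, h2⟩) (by omega)
  · exact by_contra fun h2 => absurd (hin e ⟨h1, h2⟩) (by omega)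

variable [DecidableEq V] {s t : V} {f : E → ℕ}

theorem sum_leaving_eq_flowValue_add (hsrc : ∀ e, hd e ≠ s) (hf : IsFlow tl hd s t f)
    {S : V → Prop} (hs : S s) (ht : ¬ S t) :
    ∑ e ∈ leaving tl hd S, f e = flowValue tl hd s f + ∑ e ∈ leaving hd tl S, f e := by
  classical
  set W : Finset V := insert s (univ.image tl ∪ univ.image hd)
  have hout := sum_ite_comp_eq_sum_fiber tl (W := W) (by simp [W]) S f
  have hin := sum_ite_comp_eq_sum_fiber hd (W := W) (by simp [W]) S f
  have hin_s : (∑ e, if hd e = s then f e else 0) = 0 := sum_eq_zero fun e _ => if_neg (hsrc e)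
  have hval : flowValue tl hd s f = ∑ e, if tl e = s then f e else 0 := by
    rw [flowValue, hin_s, Nat.sub_zero]
  have hcons : ∑ v ∈ W with S v, (∑ e, if tl e = v then f e else 0) =
      flowValue tl hd s f + ∑ v ∈ W with S v, ∑ e, if hd e = v then f e else 0 := by
    have hsF : s ∈ W.filter S := mem_filter.2 ⟨mem_insert_self s _, hs⟩
    rw [← add_sum_erase _ _ hsF, ← add_sum_erase _ _ hsF, hin_s, ← hval, zero_add]
    refine congrArg _ (sum_congr rfl fun v hv => ?_)
    obtain ⟨hvs, hv⟩ := mem_erase.1 hv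
    exact (hf.2 v hvs fun hvt => ht (hvt ▸ (mem_filter.1 hv).2)).symm
  have hsplit : ∀ g h : E → V, ∑ e, (if S (g e) then f e else 0) =
      ∑ e ∈ leaving g h S, f e + ∑ e, if S (g e) ∧ S (h e) then f e else 0 := fun g h => by
    rw [leaving, sum_filter, ← sum_add_distrib]
    refine sum_congr rfl fun e _ => ?_
    by_cases h1 : S (g e) <;> by_cases h2 : S (h e) <;> simp [h1, h2]
  have hsym : (∑ e, if S (hd e) ∧ S (tl e) then f e else 0) =
      ∑ e, if S (tl e) ∧ S (hd e) then f e else 0 := by simp only [and_comm]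
  rw [hsplit tl hd] at hout
  rw [hsplit hd tl, hsym] at hin
  omega

theorem ResidualClosed.card_leaving (hsrc : ∀ e, hd e ≠ s) (hf : IsFlow tl hd s t f)
    {S : V → Prop} (hS : ResidualClosed tl hd f S) (hs : S s) (ht : ¬ S t) :
    (leaving tl hd S).card = flowValue tl hd s f := by
  obtain ⟨hout, hin⟩ := (residualClosed_iff hf.1).1 hS
  calc (leaving tl hd S).card = ∑ e ∈ leaving tl hd S, f e := by
        rw [card_eq_sum_ones]; exact sum_congr rfl fun e he => (hout e he).symm
    _ = flowValue tl hd s f := by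
        rw [sum_leaving_eq_flowValue_add hsrc hf hs ht, sum_eq_zero hin, add_zero]

theorem residualClosed_of_card_leaving_le (hsrc : ∀ e, hd e ≠ s) (hf : IsFlow tl hd s t f)
    {S : V → Prop} (hs : S s) (ht : ¬ S t)
    (hle : (leaving tl hd S).card ≤ flowValue tl hd s f) : ResidualClosed tl hd f S := by
  have hcount := sum_leaving_eq_flowValue_add hsrc hf hs ht
  have hsum_le : ∑ e ∈ leaving tl hd S, f e ≤ ∑ e ∈ leaving tl hd S, 1 :=
    sum_le_sum fun e _ => hf.1 e
  rw [← card_eq_sum_ones] at hsum_le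
  refine (residualClosed_iff hf.1).2 ⟨fun e he => ?_, sum_eq_zero_iff.1 (by omega)⟩
  exact (sum_eq_sum_iff_of_le fun e _ => hf.1 e).1 (by rw [← card_eq_sum_ones]; omega) e he

theorem NSeparates.not_reachesAvoiding_of_freach (hsrc : ∀ e, hd e ≠ s) (hts : t ≠ s)
    (hf : IsFlow tl hd s t f) {B : Finset E} (hB : NSeparates tl hd s t B)
    (hcard : B.card ≤ flowValue tl hd s f) {v : V} (hv : FReach tl hd f s v) :
    ¬ ReachesAvoiding tl hd t B v := by
  have hs := hB.not_reachesAvoiding hts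
  have hleaving : leaving tl hd (fun v => ¬ ReachesAvoiding tl hd t B v) ⊆ B :=
    fun e he => by_contra fun heB =>
      (mem_leaving.1 he).1 ((not_not.1 (mem_leaving.1 he).2).of_hd heB)
  exact (residualClosed_of_card_leaving_le hsrc hf hs (not_not.2 (Or.inl rfl))
    ((card_le_card hleaving).trans hcard)).freach_imp hs hv

end Flows

theorem reachability_cut_is_primary_general {V E : Type*} [Fintype E] [DecidableEq V]
    (tl hd : E → V) (s t : V)
    (hsrc : ∀ e : E, hd e ≠ s) (hts : t ≠ s)
    (f : E → ℕ) (hf : IsFlow tl hd s t f)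
    (hmax : flowValue tl hd s f = nmincut tl hd s t)
    (CUT : Finset E)
    (hCUT : ∀ e : E, e ∈ CUT ↔ (FReach tl hd f s (tl e) ∧ ¬ FReach tl hd f s (hd e))) :
    IsPrimaryNodeMinCut tl hd s t CUT := by
  obtain rfl : CUT = leaving tl hd (FReach tl hd f s) := by ext e; rw [hCUT, mem_leaving]
  have hmin_card {C : Finset E} (hC : IsNodeMinCut tl hd s t C) : C.card ≤ flowValue tl hd s f :=
    (hC.2.trans hmax.symm).le
  obtain ⟨B, hB⟩ := exists_isNodeMinCut tl hd s t
  have ht : ¬ FReach tl hd f s t := fun h =>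
    hB.1.not_reachesAvoiding_of_freach hsrc hts hf (hmin_card hB) h (Or.inl rfl)
  refine ⟨⟨nSeparates_leaving .refl ht,
    (residualClosed_freach.card_leaving hsrc hf .refl ht).trans hmax⟩, ?_⟩
  rintro C hC p hp ⟨e, he_last, heC⟩
  by_contra! hp_avoid
  have hp_to_e : NPathFromTo tl hd s (hd e) p :=
    ⟨hp, fun d hd' => by rw [Option.mem_unique hd' he_last]⟩
  have he_reach : FReach tl hd f s (hd e) := hp_to_e.target_mem_of_disjoint_leaving .refl hp_avoid
  exact hC.1.not_reachesAvoiding_of_freach hsrc hts hf (hmin_card hC) he_reach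
    (hC.reachesAvoiding_hd hts heC)

/-- given a maximum unit-capacity flow `f` from `s` to `t`, the set
of edges whose tail is `f`-reachable from `s` but whose head is not, is the
primary minimum cut between `s` and `t`. -/
theorem reachability_cut_is_primary {V E : Type*} [Fintype E] [DecidableEq V]
    (tl hd : E → V) (s t : V)
    (hacy : Acyclic tl hd) (hsrc : ∀ e : E, hd e ≠ s) (hts : t ≠ s)
    (f : E → ℕ) (hf : IsFlow tl hd s t f)
    (hmax : flowValue tl hd s f = nmincut tl hd s t)
    (CUT : Finset E)
    (hCUT : ∀ e : E, e ∈ CUT ↔ (FReach tl hd f s (tl e) ∧ ¬ FReach tl hd f s (hd e))) :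
    IsPrimaryNodeMinCut tl hd s t CUT :=
  reachability_cut_is_primary_general tl hd s t hsrc hts f hf hmax CUT hCUT
end
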